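/- Let (X, μ) be a standard Borel probability space with μ nonatomic, let ρ be an admissible summable metric on X, and let λ₁, λ₂, … be a sequence of finite measurable partitions of X, with λ_k consisting of n_k parts of equal measure, satisfying the Lebesgue density property: for every measurable set Y ⊆ X, for μ-almost every y ∈ Y, the ratio μ(Y ∩ λ_k(y))/μ(λ_k(y)) tends to 1 as k → ∞, where λ_k(y) is the element of λ_k containing y. Then (1/n_k)·tr A_{ρ,λ_k} → 0 as k → ∞, where A_{ρ,λ}(i,j) = n² ∫_{Δ_i×Δ_j} ρ d(μ×μ) for a partition λ of X into n parts Δ₁,…,Δ_n of equal measure. -/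

import Mathlib

open MeasureTheory Filter Function Set
open scoped ENNReal Topology

/-- A semimetric on `X`: a nonnegative function vanishing on the diagonal, symmetric and
satisfying the triangle inequality for all points. -/
def IsSemimetric {X : Type*} (ρ : X → X → ℝ) : Prop :=
  (∀ x y, 0 ≤ ρ x y) ∧ (∀ x, ρ x x = 0) ∧ (∀ x y, ρ x y = ρ y x) ∧
    ∀ x y z, ρ x z ≤ ρ x y + ρ y z

/-- A metric on `X`: a semimetric that separates points. -/
def IsMetricFun {X : Type*} (ρ : X → X → ℝ) : Prop :=
  IsSemimetric ρ ∧ ∀ x y, ρ x y = 0 ↔ x = y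

/-- The semimetric space `(S, ρ)` is separable. -/
def SeparableOn {X : Type*} (ρ : X → X → ℝ) (S : Set X) : Prop :=
  ∃ D : Set X, D ⊆ S ∧ D.Countable ∧ ∀ x ∈ S, ∀ ε : ℝ, 0 < ε → ∃ y ∈ D, ρ x y < ε

/-- A semimetric is admissible for `(X, μ)` if it is measurable on `(X × X, μ × μ)` and
separable on a subset of full measure. -/
def Admissible {X : Type*} [MeasurableSpace X] (μ : Measure X) (ρ : X → X → ℝ) : Prop :=
  Measurable (Function.uncurry ρ) ∧
    ∃ S : Set X, MeasurableSet S ∧ μ Sᶜ = 0 ∧ SeparableOn ρ S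

/-- An `ε`-cover of size `k`: `X = X₀ ∪ X₁ ∪ ⋯ ∪ X_k` with `μ(X₀) < ε` and
`diam_ρ(X_j) < ε` for `j = 1, …, k`. -/
def IsEpsCover {X : Type*} [MeasurableSpace X] (μ : Measure X) (ρ : X → X → ℝ)
    (ε : ℝ) (k : ℕ) : Prop :=
  ∃ A : Fin (k + 1) → Set X, (∀ i, MeasurableSet (A i)) ∧ (⋃ i, A i) = Set.univ ∧
    μ (A 0) < ENNReal.ofReal ε ∧
    ∀ i, i ≠ 0 → ∀ x ∈ A i, ∀ y ∈ A i, ρ x y < ε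

/-- The `ε`-entropy of `(X, μ, ρ)`: the binary logarithm of the smallest size of an
`ε`-cover, and `∞` if there is no finite `ε`-cover. -/
noncomputable def epsEntropy {X : Type*} [MeasurableSpace X] (μ : Measure X)
    (ρ : X → X → ℝ) (ε : ℝ) : ℝ≥0∞ :=
  sInf {h : ℝ≥0∞ | ∃ k : ℕ, IsEpsCover μ ρ ε k ∧ h = ENNReal.ofReal (Real.logb 2 k)}

/-- The m-norm of `f`: the infimum of the `L¹`-norms of measurable semimetrics
dominating `|f|` almost everywhere (`∞` if there is no such semimetric). -/
noncomputable def mnorm {X : Type*} [MeasurableSpace X] (μ : Measure X)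
    (f : X → X → ℝ) : ℝ≥0∞ :=
  sInf {c : ℝ≥0∞ | ∃ ρ : X → X → ℝ, IsSemimetric ρ ∧ Measurable (Function.uncurry ρ) ∧
    (∀ᵐ p ∂(μ.prod μ), |f p.1 p.2| ≤ ρ p.1 p.2) ∧
    c = ∫⁻ p, ENNReal.ofReal (ρ p.1 p.2) ∂(μ.prod μ)}

/-- The m-distance between two functions. -/
noncomputable def mdist {X : Type*} [MeasurableSpace X] (μ : Measure X)
    (f g : X → X → ℝ) : ℝ≥0∞ :=
  mnorm μ fun x y => f x y - g x y

/-- The `L¹(X × X, μ × μ)` distance between two functions. -/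
noncomputable def L1dist {X : Type*} [MeasurableSpace X] (μ : Measure X)
    (f g : X → X → ℝ) : ℝ≥0∞ :=
  ∫⁻ p, ENNReal.ofReal |f p.1 p.2 - g p.1 p.2| ∂(μ.prod μ)

/-!
Write `h x = ∫ ρ(x, ·) dμ`, so that `ρ(x, y) ≤ h x + h y` by the triangle inequality and
`h ∈ L¹(μ)` by summability. Fix `ε > 0`. A pair `(x, y)` in a diagonal block `Δ × Δ` of `λ_k`
contributes at most `ε` if `ρ(x, y) < ε`, and otherwise at most `h x + h y`, so
`n_k ∑_i ∫_{Δ_i × Δ_i} ρ ≤ ε + 2 ∫ h(x) · n_k μ(λ_k(x) ∖ B(x, ε)) dμ(x)`.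
The weight `n_k μ(λ_k(x) ∖ B(x, ε))` is at most `1`, and it tends to `0` for a.e. `x`: by
separability `x` lies in a ball `B(u, ε / 2) ⊆ B(x, ε)` with `u` in a countable dense set, and
`λ_k(x)` has density tending to `1` in each of these countably many balls. Dominated convergence
makes the last integral tend to `0`.
-/

theorem tendsto_mul_measure_sdiff_nhds_zero {X : Type*} [MeasurableSpace X] {μ : Measure X}
    {c : ℕ → ℝ≥0∞} {A : ℕ → Set X} {V : Set X} (hV : MeasurableSet V) (hA : ∀ k, c k * μ (A k) = 1)
    (h : Tendsto (fun k => c k * μ (V ∩ A k)) atTop (𝓝 1)) :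
    Tendsto (fun k => c k * μ (A k \ V)) atTop (𝓝 0) := by
  have hsplit : ∀ k, c k * μ (A k \ V) = 1 - c k * μ (V ∩ A k) := fun k => by
    have hle : c k * μ (V ∩ A k) ≤ 1 := (hA k).le.trans' (by gcongr; exact inter_subset_right)
    refine ENNReal.eq_sub_of_add_eq (ne_top_of_le_ne_top ENNReal.one_ne_top hle) ?_
    rw [← hA k, ← mul_add, inter_comm, add_comm, measure_inter_add_sdiff _ hV]
  simpa [hsplit] using ENNReal.Tendsto.sub tendsto_const_nhds h (Or.inl ENNReal.one_ne_top)

theorem setLIntegral_prod_fst {X Y : Type*} [MeasurableSpace X] [MeasurableSpace Y]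
    {μ : Measure X} {ν : Measure Y} [SFinite ν] {E : Set (X × Y)} (hE : MeasurableSet E)
    {g : X → ℝ≥0∞} (hg : Measurable g) :
    ∫⁻ q in E, g q.1 ∂(μ.prod ν) = ∫⁻ x, g x * ν (Prod.mk x ⁻¹' E) ∂μ := by
  rw [← lintegral_indicator hE, lintegral_prod]
  · refine lintegral_congr fun x => ?_
    rw [← lintegral_indicator_const (measurable_prodMk_left hE)]
    rfl
  · exact ((hg.comp measurable_fst).indicator hE).aemeasurable

theorem setLIntegral_prod_fst_add_snd {X : Type*} [MeasurableSpace X] {μ : Measure X}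
    [SFinite μ] {E : Set (X × X)} (hE : MeasurableSet E) (hswap : Prod.swap ⁻¹' E = E)
    {g : X → ℝ≥0∞} (hg : Measurable g) :
    ∫⁻ q in E, (g q.1 + g q.2) ∂(μ.prod μ) = 2 * ∫⁻ x, g x * μ (Prod.mk x ⁻¹' E) ∂μ := by
  have hsnd : ∫⁻ q in E, g q.2 ∂(μ.prod μ) = ∫⁻ q in E, g q.1 ∂(μ.prod μ) := by
    rw [← lintegral_indicator hE, ← lintegral_indicator hE, ← lintegral_prod_swap]
    conv_rhs => rw [← hswap]
    rfl
  rw [lintegral_add_left (by fun_prop), hsnd, ← two_mul, setLIntegral_prod_fst hE hg]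

theorem tendsto_lintegral_mul_nhds_zero {X : Type*} [MeasurableSpace X] {μ : Measure X}
    {h : X → ℝ≥0∞} {ψ : ℕ → X → ℝ≥0∞} (hh : Measurable h) (hfin : ∫⁻ x, h x ∂μ ≠ ∞)
    (hψm : ∀ k, Measurable (ψ k)) (hψ1 : ∀ k x, ψ k x ≤ 1)
    (hψ : ∀ᵐ x ∂μ, Tendsto (ψ · x) atTop (𝓝 0)) :
    Tendsto (fun k => ∫⁻ x, h x * ψ k x ∂μ) atTop (𝓝 0) := by
  rw [← lintegral_zero]
  exact tendsto_lintegral_of_dominated_convergence h (fun k => hh.mul (hψm k))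
    (fun k => ae_of_all _ fun x => mul_le_of_le_one_right' (hψ1 k x)) hfin
    (by
      filter_upwards [hψ, ae_lt_top hh hfin] with x hx hhx
      simpa using ENNReal.Tendsto.const_mul hx (Or.inr hhx.ne))

section Semimetric

variable {X : Type*} [MeasurableSpace X] {ρ : X → X → ℝ}

theorem ofReal_le_lintegral_add_lintegral (μ : Measure X) [IsProbabilityMeasure μ]
    (hρ : IsSemimetric ρ) (hm : Measurable (uncurry ρ)) (x y : X) :
    ENNReal.ofReal (ρ x y)
      ≤ ∫⁻ z, ENNReal.ofReal (ρ x z) ∂μ + ∫⁻ z, ENNReal.ofReal (ρ y z) ∂μ := by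
  obtain ⟨-, -, hsymm, htri⟩ := hρ
  calc ENNReal.ofReal (ρ x y) = ∫⁻ _, ENNReal.ofReal (ρ x y) ∂μ := by simp
    _ ≤ ∫⁻ z, (ENNReal.ofReal (ρ x z) + ENNReal.ofReal (ρ y z)) ∂μ := by
      refine lintegral_mono fun z => ?_
      exact (ENNReal.ofReal_le_ofReal ((htri x z y).trans_eq (by rw [hsymm z y]))).trans
        ENNReal.ofReal_add_le
    _ = _ := lintegral_add_left (hm.comp measurable_prodMk_left).ennreal_ofReal _

theorem lintegral_lintegral_ofReal_ne_top {μ : Measure X} [SFinite μ]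
    (hm : Measurable (uncurry ρ)) (hint : Integrable (uncurry ρ) (μ.prod μ)) :
    ∫⁻ x, ∫⁻ y, ENNReal.ofReal (ρ x y) ∂μ ∂μ ≠ ∞ := by
  rw [← lintegral_prod (fun q => ENNReal.ofReal (ρ q.1 q.2)) hm.ennreal_ofReal.aemeasurable]
  exact hint.lintegral_lt_top.ne

theorem ae_tendsto_mul_measure_sdiff_ball_nhds_zero {μ : Measure X} (hρ : IsSemimetric ρ)
    (hm : Measurable (uncurry ρ)) {S : Set X} (hS : μ Sᶜ = 0) (hsep : SeparableOn ρ S)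
    {c : ℕ → ℝ≥0∞} {cell : ℕ → X → Set X} (hcell : ∀ k x, c k * μ (cell k x) = 1)
    (hdensity : ∀ Y : Set X, MeasurableSet Y → ∀ᵐ y ∂μ, y ∈ Y →
      Tendsto (fun k => c k * μ (Y ∩ cell k y)) atTop (𝓝 1))
    {ε : ℝ} (hε : 0 < ε) :
    ∀ᵐ x ∂μ, Tendsto (fun k => c k * μ (cell k x \ {y | ρ x y < ε})) atTop (𝓝 0) := by
  obtain ⟨-, -, hsymm, htri⟩ := hρ
  obtain ⟨D, -, hD, hdense⟩ := hsep
  have := hD.to_subtype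
  let V : X → Set X := fun u => {y | ρ u y < ε / 2}
  have hV : ∀ u, MeasurableSet (V u) := fun u =>
    measurableSet_lt (hm.comp measurable_prodMk_left) measurable_const
  have hdens : ∀ᵐ x ∂μ, ∀ u : D, x ∈ V u →
      Tendsto (fun k => c k * μ (V u ∩ cell k x)) atTop (𝓝 1) :=
    ae_all_iff.2 fun u => hdensity _ (hV u)
  filter_upwards [hdens, mem_ae_iff.2 hS] with x hxV hxS
  obtain ⟨u, hu, hxu⟩ := hdense x hxS (ε / 2) (half_pos hε)
  have hball : V u ⊆ {y | ρ x y < ε} := fun y (hy : ρ u y < ε / 2) =>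
    (htri x u y).trans_lt (by linarith : ρ x u + ρ u y < ε)
  refine tendsto_of_tendsto_of_tendsto_of_le_of_le tendsto_const_nhds
    (tendsto_mul_measure_sdiff_nhds_zero (hV u) (hcell · x)
      (hxV ⟨u, hu⟩ (show ρ u x < ε / 2 by rwa [hsymm]))) (fun k => zero_le)
    fun k => by gcongr

end Semimetric

section Partition

variable {X ι : Type*} {parts : ι → Set X} {idx : X → ι}

def diagonalBlocks (parts : ι → Set X) : Set (X × X) := ⋃ i, parts i ×ˢ parts i

theorem preimage_mk_diagonalBlocks (hdisj : Pairwise (Disjoint on parts))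
    (hidx : ∀ x, x ∈ parts (idx x)) (x : X) :
    Prod.mk x ⁻¹' diagonalBlocks parts = parts (idx x) := by
  ext y
  simp only [diagonalBlocks, mem_preimage, mem_iUnion, mem_prod]
  refine ⟨fun ⟨i, hxi, hyi⟩ => ?_, fun hy => ⟨idx x, hidx x, hy⟩⟩
  by_contra hne
  exact disjoint_left.mp (hdisj fun h => hne (by subst h; exact hyi)) hxi (hidx x)

theorem preimage_swap_diagonalBlocks :
    Prod.swap ⁻¹' diagonalBlocks parts = diagonalBlocks parts := by
  ext q
  simp only [diagonalBlocks, mem_preimage, mem_iUnion, mem_prod, Prod.fst_swap, Prod.snd_swap,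
    and_comm]

variable [MeasurableSpace X]

theorem measurableSet_diagonalBlocks [Countable ι] (hmeas : ∀ i, MeasurableSet (parts i)) :
    MeasurableSet (diagonalBlocks parts) :=
  .iUnion fun i => (hmeas i).prod (hmeas i)

theorem sum_setLIntegral_eq_setLIntegral_diagonalBlocks [Fintype ι] {m : Measure (X × X)}
    (hmeas : ∀ i, MeasurableSet (parts i)) (hdisj : Pairwise (Disjoint on parts))
    (f : X × X → ℝ≥0∞) :
    ∑ i, ∫⁻ q in parts i ×ˢ parts i, f q ∂m = ∫⁻ q in diagonalBlocks parts, f q ∂m := by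
  rw [diagonalBlocks, lintegral_iUnion (fun i => (hmeas i).prod (hmeas i)), tsum_fintype]
  exact fun i j hij => (hdisj hij).set_prod_left _ _

theorem mul_prod_diagonalBlocks_le_one [Countable ι] {μ : Measure X} [IsProbabilityMeasure μ]
    (hmeas : ∀ i, MeasurableSet (parts i)) (hdisj : Pairwise (Disjoint on parts))
    {c : ℝ≥0∞} (heq : ∀ i, μ (parts i) = c⁻¹) :
    c * (μ.prod μ) (diagonalBlocks parts) ≤ 1 :=
  calc c * (μ.prod μ) (diagonalBlocks parts)
      ≤ c * ∑' i, (μ.prod μ) (parts i ×ˢ parts i) := by gcongr; exact measure_iUnion_le _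
    _ = c * c⁻¹ * μ (⋃ i, parts i) := by
      simp only [Measure.prod_prod, measure_iUnion hdisj hmeas, ENNReal.tsum_mul_left, heq,
        mul_assoc]
    _ ≤ 1 := mul_le_one' (ENNReal.mul_inv_le_one c) prob_le_one

variable {ρ : X → X → ℝ}

theorem measurable_measure_cell_sdiff_ball [Countable ι] {μ : Measure X} [SFinite μ]
    (hm : Measurable (uncurry ρ)) (hmeas : ∀ i, MeasurableSet (parts i))
    (hdisj : Pairwise (Disjoint on parts)) (hidx : ∀ x, x ∈ parts (idx x)) (ε : ℝ) :
    Measurable fun x => μ (parts (idx x) \ {y | ρ x y < ε}) := by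
  have hsec : ∀ x, parts (idx x) \ {y | ρ x y < ε}
      = Prod.mk x ⁻¹' (diagonalBlocks parts \ {q | ρ q.1 q.2 < ε}) := fun x => by
    rw [preimage_sdiff, preimage_mk_diagonalBlocks hdisj hidx]; rfl
  simp_rw [hsec]
  exact measurable_measure_prodMk_left
    ((measurableSet_diagonalBlocks hmeas).diff (measurableSet_lt hm measurable_const))

theorem mul_setLIntegral_diagonalBlocks_le [Countable ι] {μ : Measure X}
    [IsProbabilityMeasure μ] (hρ : IsSemimetric ρ) (hm : Measurable (uncurry ρ))
    (hmeas : ∀ i, MeasurableSet (parts i)) (hdisj : Pairwise (Disjoint on parts))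
    (hidx : ∀ x, x ∈ parts (idx x)) {c : ℝ≥0∞} (heq : ∀ i, μ (parts i) = c⁻¹) (ε : ℝ) :
    c * ∫⁻ q in diagonalBlocks parts, ENNReal.ofReal (ρ q.1 q.2) ∂(μ.prod μ)
      ≤ ENNReal.ofReal ε + 2 * ∫⁻ x, (∫⁻ y, ENNReal.ofReal (ρ x y) ∂μ) *
          (c * μ (parts (idx x) \ {y | ρ x y < ε})) ∂μ := by
  set D := diagonalBlocks parts
  set N : Set (X × X) := {q | ρ q.1 q.2 < ε}
  set h : X → ℝ≥0∞ := fun x => ∫⁻ y, ENNReal.ofReal (ρ x y) ∂μ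
  have hD : MeasurableSet D := measurableSet_diagonalBlocks hmeas
  have hN : MeasurableSet N := measurableSet_lt hm measurable_const
  have hh : Measurable h := hm.ennreal_ofReal.lintegral_prod_right'
  have hnear : ∫⁻ q in D ∩ N, ENNReal.ofReal (ρ q.1 q.2) ∂(μ.prod μ)
      ≤ ENNReal.ofReal ε * (μ.prod μ) D :=
    calc _ ≤ ∫⁻ _ in D ∩ N, ENNReal.ofReal ε ∂(μ.prod μ) :=
          setLIntegral_mono measurable_const fun q hq => ENNReal.ofReal_le_ofReal hq.2.le
      _ ≤ _ := by rw [setLIntegral_const]; gcongr; exact inter_subset_left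
  have hfar : ∫⁻ q in D \ N, ENNReal.ofReal (ρ q.1 q.2) ∂(μ.prod μ)
      ≤ 2 * ∫⁻ x, h x * μ (parts (idx x) \ {y | ρ x y < ε}) ∂μ :=
    calc _ ≤ ∫⁻ q in D \ N, (h q.1 + h q.2) ∂(μ.prod μ) :=
          setLIntegral_mono (by fun_prop) fun q _ =>
            ofReal_le_lintegral_add_lintegral μ hρ hm q.1 q.2
      _ = _ := by
        have hswapN : Prod.swap ⁻¹' N = N := by
          obtain ⟨-, -, hsymm, -⟩ := hρ
          ext q; exact iff_of_eq (congrArg (· < ε) (hsymm q.2 q.1))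
        rw [setLIntegral_prod_fst_add_snd (hD.diff hN)
          (by rw [preimage_sdiff, preimage_swap_diagonalBlocks, hswapN]) hh]
        congr 1
        refine lintegral_congr fun x => ?_
        rw [preimage_sdiff, preimage_mk_diagonalBlocks hdisj hidx]
        rfl
  calc _ = c * (∫⁻ q in D ∩ N, ENNReal.ofReal (ρ q.1 q.2) ∂(μ.prod μ)
        + ∫⁻ q in D \ N, ENNReal.ofReal (ρ q.1 q.2) ∂(μ.prod μ)) := by
        rw [lintegral_inter_add_sdiff _ _ hN]
    _ ≤ c * (μ.prod μ) D * ENNReal.ofReal ε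
        + 2 * (c * ∫⁻ x, h x * μ (parts (idx x) \ {y | ρ x y < ε}) ∂μ) := by
      rw [mul_add]; gcongr ?_ + ?_
      · exact (mul_le_mul_right hnear c).trans_eq (by ring)
      · exact (mul_le_mul_right hfar c).trans_eq (by ring)
    _ ≤ _ := by
      have hmul : c * ∫⁻ x, h x * μ (parts (idx x) \ {y | ρ x y < ε}) ∂μ
          = ∫⁻ x, h x * (c * μ (parts (idx x) \ {y | ρ x y < ε})) ∂μ := by
        rw [← lintegral_const_mul _ (show Measurable fun x => h x * μ (parts (idx x) \ _) from
          hh.mul (measurable_measure_cell_sdiff_ball hm hmeas hdisj hidx ε))]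
        exact lintegral_congr fun x => mul_left_comm _ _ _
      rw [hmul]
      gcongr
      exact mul_le_of_le_one_left' (mul_prod_diagonalBlocks_le_one hmeas hdisj heq)

end Partition

theorem statement16_general {X : Type*} [MeasurableSpace X]
    (μ : Measure X) [IsProbabilityMeasure μ]
    (ρ : X → X → ℝ) (hρ : IsMetricFun ρ) (hadm : Admissible μ ρ)
    (hint : Integrable (Function.uncurry ρ) (μ.prod μ))
    (n : ℕ → ℕ) (hn : ∀ k, 1 ≤ n k) (parts : (k : ℕ) → Fin (n k) → Set X)
    (hmeas : ∀ k i, MeasurableSet (parts k i))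
    (hdisj : ∀ k, ∀ i j, i ≠ j → Disjoint (parts k i) (parts k j))
    (heq : ∀ k i, μ (parts k i) = ((n k : ℝ≥0∞))⁻¹)
    (idx : (k : ℕ) → X → Fin (n k)) (hidx : ∀ k x, x ∈ parts k (idx k x))
    (hdensity : ∀ Y : Set X, MeasurableSet Y → ∀ᵐ y ∂μ, y ∈ Y →
      Tendsto (fun k => (n k : ℝ≥0∞) * μ (Y ∩ parts k (idx k y))) atTop (nhds 1)) :
    Tendsto
      (fun k => (n k : ℝ≥0∞) *
        ∑ i, ∫⁻ q in parts k i ×ˢ parts k i, ENNReal.ofReal (ρ q.1 q.2) ∂(μ.prod μ))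
      atTop (nhds 0) := by
  obtain ⟨hmρ, S, -, hS, hsep⟩ := hadm
  have hcell : ∀ k x, (n k : ℝ≥0∞) * μ (parts k (idx k x)) = 1 := fun k x => by
    rw [heq, ENNReal.mul_inv_cancel (Nat.cast_ne_zero.mpr (Nat.one_le_iff_ne_zero.mp (hn k)))
      (ENNReal.natCast_ne_top _)]
  rw [ENNReal.tendsto_nhds_zero]
  intro ε hε
  obtain ⟨δ, -, hδ, hδε⟩ := ENNReal.lt_iff_exists_real_btwn.mp hε
  have hlim := tendsto_lintegral_mul_nhds_zero (μ := μ)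
    hmρ.ennreal_ofReal.lintegral_prod_right' (lintegral_lintegral_ofReal_ne_top hmρ hint)
    (fun k => (measurable_measure_cell_sdiff_ball hmρ (hmeas k) (fun i j => hdisj k i j)
      (hidx k) δ).const_mul _)
    (fun k x => (mul_le_mul_right (measure_mono sdiff_subset) _).trans (hcell k x).le)
    (ae_tendsto_mul_measure_sdiff_ball_nhds_zero hρ.1 hmρ hS hsep hcell hdensity
      (ENNReal.ofReal_pos.mp hδ))
  have hbound := (ENNReal.Tendsto.const_mul hlim
    (Or.inr (ENNReal.ofNat_ne_top (n := 2)))).const_add (ENNReal.ofReal δ)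
  rw [mul_zero, add_zero] at hbound
  filter_upwards [hbound.eventually (gt_mem_nhds hδε)] with k hk
  rw [sum_setLIntegral_eq_setLIntegral_diagonalBlocks (hmeas k) (fun i j => hdisj k i j)]
  exact (mul_setLIntegral_diagonalBlocks_le hρ.1 hmρ (hmeas k) (fun i j => hdisj k i j) (hidx k)
    (heq k) δ).trans hk.le

/-- let `ρ` be an admissible summable metric and `λ_k` a sequence of finite
measurable partitions of `X` into `n_k` parts of equal measure satisfying the Lebesgue
density property (for every measurable `Y`, for a.e. `y ∈ Y`, the density
`μ(Y ∩ λ_k(y))/μ(λ_k(y)) = n_k · μ(Y ∩ λ_k(y))` tends to `1`). Then the normalized traces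
`(1/n_k)·tr A_{ρ,λ_k} = n_k ∑_i ∫_{Δ_i×Δ_i} ρ` tend to `0`. -/
theorem statement16 {X : Type*} [MeasurableSpace X] [StandardBorelSpace X]
    (μ : Measure X) [IsProbabilityMeasure μ] [NullSingletonClass μ]
    (ρ : X → X → ℝ) (hρ : IsMetricFun ρ) (hadm : Admissible μ ρ)
    (hint : Integrable (Function.uncurry ρ) (μ.prod μ))
    (n : ℕ → ℕ) (hn : ∀ k, 1 ≤ n k) (parts : (k : ℕ) → Fin (n k) → Set X)
    (hmeas : ∀ k i, MeasurableSet (parts k i))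
    (hcover : ∀ k, (⋃ i, parts k i) = Set.univ)
    (hdisj : ∀ k, ∀ i j, i ≠ j → Disjoint (parts k i) (parts k j))
    (heq : ∀ k i, μ (parts k i) = ((n k : ℝ≥0∞))⁻¹)
    (idx : (k : ℕ) → X → Fin (n k)) (hidx : ∀ k x, x ∈ parts k (idx k x))
    (hdensity : ∀ Y : Set X, MeasurableSet Y → ∀ᵐ y ∂μ, y ∈ Y →
      Tendsto (fun k => (n k : ℝ≥0∞) * μ (Y ∩ parts k (idx k y))) atTop (nhds 1)) :
    Tendsto
      (fun k => (n k : ℝ≥0∞) *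
        ∑ i, ∫⁻ q in parts k i ×ˢ parts k i, ENNReal.ofReal (ρ q.1 q.2) ∂(μ.prod μ))
      atTop (nhds 0) :=
  statement16_general μ ρ hρ hadm hint n hn parts hmeas hdisj heq idx hidx hdensity
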